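/- Let c be an admissible coefficient function satisfying (Cubic values). Let i_1, i_2, i_3 ∈ {1,2,3} be pairwise distinct with a_{i_1} ≥ 3 and a_{i_2} = 2. Let γ ∈ ℤ^{μ_A−2} be non-negative with |γ| = 4, γ_{i_3,j_3} = 0 for all j_3 ≥ 1, and γ − e_{i_1,j_1} − 2e_{i_2,1} ≥ 0 for some j_1 ≥ 2. Then c(γ,0) = 0. -/

import Mathlib

/- Common framework: Frobenius manifolds for orbifold projective lines ℙ¹_A,
   following Ishibashi–Shiraishi–Takahashi. -/

namespace FrobeniusUniqueness

/-- A point index `(i, j)` labelling a flat coordinate `t_{i,j}`. -/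
abbrev Pt : Type := Fin 3 × ℕ

/-- A non-negative element of `ℤ^{μ_A − 2}`: an exponent vector `α` with `α_{i,j} ∈ ℕ`. -/
abbrev Expv : Type := Pt →₀ ℕ

/-- The standard basis vector `e_{i,j}`. -/
noncomputable def e (i : Fin 3) (j : ℕ) : Expv := Finsupp.single (i, j) 1

/-- The length `|α|` of an exponent vector. -/
def len (α : Expv) : ℕ := α.sum fun _ n => n

/-- A point index `(i,j)` is valid if `1 ≤ j ≤ a_i − 1`. -/
def ValidPt (A : Fin 3 → ℕ) (p : Pt) : Prop := 1 ≤ p.2 ∧ p.2 ≤ A p.1 - 1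

/-- An exponent vector lies in `ℤ^{μ_A − 2}` iff it is supported on valid indices. -/
def Valid (A : Fin 3 → ℕ) (α : Expv) : Prop := ∀ p ∈ α.support, ValidPt A p

/-- The combinatorial factor `s_{a,b,c}`. -/
def sFactor (a b c : ℕ) : ℂ :=
  if a = b ∧ b = c then 6
  else if a ≠ b ∧ b ≠ c ∧ a ≠ c then 1
  else 2

/-- The index type for the flat coordinates `t_1`, `t_{i,j}`, `t_{μ_A}`. -/
inductive Idx : Type where
  | one : Idx
  | pt : Fin 3 → ℕ → Idx
  | mu : Idx
deriving DecidableEq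

/-- Validity of a flat coordinate index. -/
def ValidIdx (A : Fin 3 → ℕ) : Idx → Prop
  | .one => True
  | .pt i j => ValidPt A (i, j)
  | .mu => True

/-- The metric `η` in the frame `∂_1, ∂_{i,j}, ∂_{μ_A}`. -/
noncomputable def eta (A : Fin 3 → ℕ) : Idx → Idx → ℂ
  | .one, .mu => 1
  | .mu, .one => 1
  | .pt i j, .pt i' j' =>
      if i = i' ∧ j + j' = A i ∧ 1 ≤ j ∧ j ≤ A i - 1 then (A i : ℂ)⁻¹ else 0
  | _, _ => 0

/-- The point indices occurring in an `Idx`. -/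
def ptsOf : Idx → List Pt
  | .pt i j => [(i, j)]
  | _ => []

/-- The number of occurrences of `μ_A` in an `Idx`. -/
def muCount : Idx → ℕ
  | .mu => 1
  | _ => 0

/-- The factor produced when the monomial `t^{β + Σ_{p ∈ ps} e_p}` is differentiated by
`∏_{p ∈ ps} ∂_p`, leaving the monomial `t^β`. -/
noncomputable def dfac (β : Expv) : List Pt → ℕ
  | [] => 1
  | p :: ps =>
      ((β + ((ps.map fun q => (Finsupp.single q 1 : Expv)).sum) + Finsupp.single p 1 : Expv) p)
        * dfac β ps

/-- `der A c a b d β m` is the coefficient of `t^β · e^{m·t_{μ_A}}` in `∂_a ∂_b ∂_d F`, where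
`F = (1/2)t_1²t_{μ_A} + (1/2)t_1·Σ_{i,j}(1/a_i)t_{i,j}t_{i,a_i−j} + Σ_{α,m} c(α,m)t^α e^{m t_{μ_A}}`
is the potential of the coefficient function `c`.  In particular `∂_1∂_a∂_b F = η(∂_a,∂_b)`. -/
noncomputable def der (A : Fin 3 → ℕ) (c : Expv → ℕ → ℂ) (a b d : Idx) (β : Expv) (m : ℕ) : ℂ :=
  if a = .one then (if β = 0 ∧ m = 0 then eta A b d else 0)
  else if b = .one then (if β = 0 ∧ m = 0 then eta A a d else 0)
  else if d = .one then (if β = 0 ∧ m = 0 then eta A a b else 0)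
  else
    (m : ℂ) ^ (muCount a + muCount b + muCount d) *
      (dfac β (ptsOf a ++ ptsOf b ++ ptsOf d) : ℂ) *
      c (β + (((ptsOf a ++ ptsOf b ++ ptsOf d).map fun q => (Finsupp.single q 1 : Expv)).sum)) m

/-- The coefficient of `t^β · e^{m·t_{μ_A}}` in
`Σ_{σ,τ} ∂_a∂_b∂_σF · η^{στ} · ∂_τ∂_d∂_e F`, where `(η^{στ})` is the inverse matrix of
`(η_{στ})` (so the only nonzero entries are `η^{1,μ_A} = η^{μ_A,1} = 1` and
`η^{(i,j),(i,a_i−j)} = a_i`). -/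
noncomputable def quadTerm (A : Fin 3 → ℕ) (c : Expv → ℕ → ℂ) (a b d e' : Idx)
    (β : Expv) (m : ℕ) : ℂ :=
  ∑ x ∈ Finset.HasAntidiagonal.antidiagonal β, ∑ y ∈ Finset.HasAntidiagonal.antidiagonal m,
    (der A c a b .one x.1 y.1 * der A c .mu d e' x.2 y.2
     + der A c a b .mu x.1 y.1 * der A c .one d e' x.2 y.2
     + ∑ i : Fin 3, ∑ j ∈ Finset.Icc 1 (A i - 1),
         (A i : ℂ) * der A c a b (.pt i j) x.1 y.1 * der A c (.pt i (A i - j)) d e' x.2 y.2)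

/-- `χ_A = 1/a_1 + 1/a_2 + 1/a_3 − 1`. -/
noncomputable def chi (A : Fin 3 → ℕ) : ℚ := (A 0 : ℚ)⁻¹ + (A 1 : ℚ)⁻¹ + (A 2 : ℚ)⁻¹ - 1

/-- The degree of the monomial `t^α`: `Σ_{i,j} α_{i,j}·(a_i − j)/a_i`. -/
noncomputable def deg (A : Fin 3 → ℕ) (α : Expv) : ℚ :=
  α.sum fun p n => (n : ℚ) * (((A p.1 : ℚ) - (p.2 : ℚ)) / (A p.1 : ℚ))

/-- A coefficient function is admissible if it satisfies (Homogeneity) and the WDVV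
equations (coefficientwise, in the variables `t_{i,j}` and `e^{t_{μ_A}}`). -/
structure IsAdmissible (A : Fin 3 → ℕ) (c : Expv → ℕ → ℂ) : Prop where
  homog : ∀ α : Expv, Valid A α → ∀ m : ℕ, c α m ≠ 0 → deg A α + (m : ℚ) * chi A = 2
  wdvv : ∀ a b d e' : Idx, ValidIdx A a → ValidIdx A b → ValidIdx A d → ValidIdx A e' →
      ∀ β : Expv, Valid A β → ∀ m : ℕ,
        quadTerm A c a b d e' β m = quadTerm A c a d b e' β m

/-- (Cubic values). -/
def CubicValues (A : Fin 3 → ℕ) (c : Expv → ℕ → ℂ) : Prop :=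
  (∀ (i₁ i₂ i₃ : Fin 3) (j₁ j₂ j₃ : ℕ),
      ValidPt A (i₁, j₁) → ValidPt A (i₂, j₂) → ValidPt A (i₃, j₃) →
      ¬(i₁ = i₂ ∧ i₂ = i₃) → c (e i₁ j₁ + e i₂ j₂ + e i₃ j₃) 0 = 0) ∧
  (∀ (i : Fin 3) (j₁ j₂ j₃ : ℕ),
      ValidPt A (i, j₁) → ValidPt A (i, j₂) → ValidPt A (i, j₃) →
      sFactor j₁ j₂ j₃ * c (e i j₁ + e i j₂ + e i j₃) 0 =
        if j₁ + j₂ + j₃ = A i then (A i : ℂ)⁻¹ else 0)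

/-- (Normalization). -/
def Normalization (A : Fin 3 → ℕ) (c : Expv → ℕ → ℂ) : Prop :=
  (2 ≤ A 0 → c (e 0 1 + e 1 1 + e 2 1) 1 = 1) ∧
  (A 0 = 1 → A 0 < A 1 → c (e 1 1 + e 2 1) 1 = 1) ∧
  (A 0 = 1 → A 1 = 1 → A 1 < A 2 → c (e 2 1) 1 = 1) ∧
  (A 0 = 1 → A 1 = 1 → A 2 = 1 → c 0 1 = 1)

/-- (Separation). -/
def Separation (A : Fin 3 → ℕ) (c : Expv → ℕ → ℂ) : Prop :=
  ∀ γ : Expv, Valid A γ →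
    ∀ (i₁ i₂ : Fin 3) (j₁ j₂ : ℕ), i₁ ≠ i₂ → ValidPt A (i₁, j₁) → ValidPt A (i₂, j₂) →
      e i₁ j₁ + e i₂ j₂ ≤ γ → c γ 0 = 0

/-- The automorphism of `ℤ^{μ_A−2}` exchanging `e_{i₁,j}` and `e_{i₂,j}` for all `j`. -/
def swapExp (i₁ i₂ : Fin 3) (α : Expv) : Expv :=
  Finsupp.equivMapDomain ((Equiv.swap i₁ i₂).prodCongr (Equiv.refl ℕ)) α

/-- (Symmetry). -/
def Symmetry (A : Fin 3 → ℕ) (c : Expv → ℕ → ℂ) : Prop :=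
  ∀ i₁ i₂ : Fin 3, A i₁ = A i₂ → ∀ α : Expv, Valid A α → ∀ m : ℕ,
    c (swapExp i₁ i₂ α) m = c α m


/-!
Write `γ = e_{i₁,j₁} + 2e_{i₂,1} + e_p` and compare the coefficients of `t^{e_p}` (with `m = 0`)
in the WDVV equation for `(∂_{i₂,1}, ∂_{i₂,1}, ∂_{i₁,1}, ∂_{i₁,j₁-1})`. At `m = 0` only
contractions over `σ = (i, j)` survive, and each term is a cubic coefficient times a coefficient
of length four. On the right-hand side every cubic coefficient involves both branches `i₁ ≠ i₂`,
so it vanishes. On the left, `c(2e_{i₂,1} + e_{i,j}, 0) = 0` because `1 + 1 + j ≠ a_{i₂} = 2`, and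
the only remaining term is `a_{i₁} · c(γ, 0) · c(e_{i₁,a_{i₁}-j₁} + e_{i₁,1} + e_{i₁,j₁-1}, 0)`
up to positive factorials, whose cubic factor is nonzero since its indices add up to `a_{i₁}`.
-/

theorem len_add (α β : Expv) : len (α + β) = len α + len β :=
  Finsupp.sum_add_index' (fun _ => rfl) fun _ _ _ => rfl

theorem len_single (p : Pt) (n : ℕ) : len (Finsupp.single p n) = n :=
  Finsupp.sum_single_index rfl

theorem exists_eq_add_single_of_le {α γ : Expv} (hle : α ≤ γ) (hlen : len γ = len α + 1) :
    ∃ p, γ = α + Finsupp.single p 1 := by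
  obtain ⟨δ, rfl⟩ := exists_add_of_le hle
  rw [len_add, Nat.add_left_cancel_iff] at hlen
  obtain ⟨p, rfl⟩ := (Finsupp.sum_eq_one_iff δ).mp hlen
  exact ⟨p, rfl⟩

theorem Valid.mono {A : Fin 3 → ℕ} {α γ : Expv} (h : Valid A γ) (hle : α ≤ γ) : Valid A α :=
  fun p hp => h p (Finsupp.support_mono hle hp)

theorem validPt_iff {A : Fin 3 → ℕ} {i : Fin 3} {j : ℕ} :
    ValidPt A (i, j) ↔ 1 ≤ j ∧ j ≤ A i - 1 :=
  Iff.rfl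

theorem ValidPt.dual {A : Fin 3 → ℕ} {i : Fin 3} {j : ℕ} (h : ValidPt A (i, j)) :
    ValidPt A (i, A i - j) := by
  obtain ⟨h₁, h₂⟩ := validPt_iff.1 h
  exact validPt_iff.2 ⟨by omega, by omega⟩

theorem sum_antidiagonal_single_one {α M : Type*} [DecidableEq α] [AddCommMonoid M]
    (p : α) (f : (α →₀ ℕ) × (α →₀ ℕ) → M) :
    ∑ x ∈ Finset.HasAntidiagonal.antidiagonal (Finsupp.single p 1), f x
      = f (0, Finsupp.single p 1) + f (Finsupp.single p 1, 0) := by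
  rw [Finsupp.antidiagonal_single, Finset.sum_map, Finset.Nat.antidiagonal_succ]
  simp

theorem sFactor_ne_zero (a b c : ℕ) : sFactor a b c ≠ 0 := by
  unfold sFactor
  split_ifs <;> norm_num

theorem dfac_pos (β : Expv) (ps : List Pt) : 0 < dfac β ps := by
  induction ps with
  | nil => exact Nat.one_pos
  | cons p ps ih => exact Nat.mul_pos (by simp) ih

section Derivatives

variable {A : Fin 3 → ℕ} {c : Expv → ℕ → ℂ}

theorem der_pt_pt_pt (i₁ i₂ i₃ : Fin 3) (j₁ j₂ j₃ : ℕ) (β : Expv) :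
    der A c (.pt i₁ j₁) (.pt i₂ j₂) (.pt i₃ j₃) β 0
      = dfac β [(i₁, j₁), (i₂, j₂), (i₃, j₃)] * c (β + e i₁ j₁ + e i₂ j₂ + e i₃ j₃) 0 := by
  simp [der, ptsOf, muCount, e, add_assoc]

theorem der_pt_pt_pt_eq_zero_iff {i₁ i₂ i₃ : Fin 3} {j₁ j₂ j₃ : ℕ} {β : Expv} :
    der A c (.pt i₁ j₁) (.pt i₂ j₂) (.pt i₃ j₃) β 0 = 0
      ↔ c (β + e i₁ j₁ + e i₂ j₂ + e i₃ j₃) 0 = 0 := by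
  rw [der_pt_pt_pt, mul_eq_zero, Nat.cast_eq_zero, or_iff_right (dfac_pos _ _).ne']

theorem der_pt_pt_mu (i₁ i₂ : Fin 3) (j₁ j₂ : ℕ) (β : Expv) :
    der A c (.pt i₁ j₁) (.pt i₂ j₂) .mu β 0 = 0 := by
  simp [der, muCount]

theorem der_mu_pt_pt (i₁ i₂ : Fin 3) (j₁ j₂ : ℕ) (β : Expv) :
    der A c .mu (.pt i₁ j₁) (.pt i₂ j₂) β 0 = 0 := by
  simp [der, muCount]

/-- The summand of `quadTerm` over `σ = (i, j)`, `τ = (i, a_i - j)` at `m = 0`, for the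
splitting `x + y` of the exponent. -/
noncomputable def ptContraction (A : Fin 3 → ℕ) (c : Expv → ℕ → ℂ) (a b d e' : Idx)
    (x y : Expv) : ℂ :=
  ∑ i : Fin 3, ∑ j ∈ Finset.Icc 1 (A i - 1),
    (A i : ℂ) * der A c a b (.pt i j) x 0 * der A c (.pt i (A i - j)) d e' y 0

/-- With `m = 0` the `∂_1`/`∂_{μ_A}` part of the contraction drops out, since `∂_{μ_A}` brings
down the factor `m`. -/
theorem quadTerm_pt_single (u₁ u₂ u₃ u₄ : Fin 3) (v₁ v₂ v₃ v₄ : ℕ) (p : Pt) :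
    quadTerm A c (.pt u₁ v₁) (.pt u₂ v₂) (.pt u₃ v₃) (.pt u₄ v₄) (Finsupp.single p 1) 0
      = ptContraction A c (.pt u₁ v₁) (.pt u₂ v₂) (.pt u₃ v₃) (.pt u₄ v₄) 0 (Finsupp.single p 1)
        + ptContraction A c (.pt u₁ v₁) (.pt u₂ v₂) (.pt u₃ v₃) (.pt u₄ v₄)
            (Finsupp.single p 1) 0 := by
  rw [quadTerm, sum_antidiagonal_single_one]
  simp [der_pt_pt_mu, der_mu_pt_pt, ptContraction]

variable {a b d e' : Idx} {x y : Expv}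

theorem ptContraction_eq_zero_of_left
    (h : ∀ i j, ValidPt A (i, j) → der A c a b (.pt i j) x 0 = 0) :
    ptContraction A c a b d e' x y = 0 :=
  Finset.sum_eq_zero fun i _ => Finset.sum_eq_zero fun j hj => by
    rw [h i j (Finset.mem_Icc.mp hj), mul_zero, zero_mul]

theorem ptContraction_eq_zero_of_right
    (h : ∀ i j, ValidPt A (i, j) → der A c (.pt i (A i - j)) d e' y 0 = 0) :
    ptContraction A c a b d e' x y = 0 :=
  Finset.sum_eq_zero fun i _ => Finset.sum_eq_zero fun j hj => by
    rw [h i j (Finset.mem_Icc.mp hj), mul_zero]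

theorem ptContraction_eq_of_right {i₀ : Fin 3} {j₀ : ℕ} (hv : ValidPt A (i₀, j₀))
    (h : ∀ i j, ValidPt A (i, j) → (i, j) ≠ (i₀, j₀) → der A c (.pt i (A i - j)) d e' y 0 = 0) :
    ptContraction A c a b d e' x y
      = A i₀ * der A c a b (.pt i₀ j₀) x 0 * der A c (.pt i₀ (A i₀ - j₀)) d e' y 0 := by
  rw [ptContraction, Finset.sum_eq_single_of_mem i₀ (Finset.mem_univ _),
    Finset.sum_eq_single_of_mem j₀ (Finset.mem_Icc.mpr hv)]
  · intro j hj hne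
    rw [h i₀ j (Finset.mem_Icc.mp hj) (by simpa using hne), mul_zero]
  · intro i _ hne
    refine Finset.sum_eq_zero fun j hj => ?_
    rw [h i j (Finset.mem_Icc.mp hj) (by simp [hne]), mul_zero]

end Derivatives

section CubicValues

variable {A : Fin 3 → ℕ} {c : Expv → ℕ → ℂ} {i₁ i₂ i₃ : Fin 3} {j₁ j₂ j₃ : ℕ}

theorem CubicValues.der_eq_zero (hcub : CubicValues A c) (h₁ : ValidPt A (i₁, j₁))
    (h₂ : ValidPt A (i₂, j₂)) (h₃ : ValidPt A (i₃, j₃))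
    (h : ¬(i₁ = i₂ ∧ i₂ = i₃ ∧ j₁ + j₂ + j₃ = A i₁)) :
    der A c (.pt i₁ j₁) (.pt i₂ j₂) (.pt i₃ j₃) 0 0 = 0 := by
  rw [der_pt_pt_pt_eq_zero_iff, zero_add]
  by_cases hi : i₁ = i₂ ∧ i₂ = i₃
  · obtain ⟨rfl, rfl⟩ := hi
    have hs := hcub.2 i₁ j₁ j₂ j₃ h₁ h₂ h₃
    rw [if_neg (by tauto), mul_eq_zero] at hs
    exact hs.resolve_left (sFactor_ne_zero _ _ _)
  · exact hcub.1 i₁ i₂ i₃ j₁ j₂ j₃ h₁ h₂ h₃ hi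

theorem CubicValues.der_ne_zero (hcub : CubicValues A c) (h₁ : ValidPt A (i₁, j₁))
    (h₂ : ValidPt A (i₁, j₂)) (h₃ : ValidPt A (i₁, j₃)) (h : j₁ + j₂ + j₃ = A i₁) :
    der A c (.pt i₁ j₁) (.pt i₁ j₂) (.pt i₁ j₃) 0 0 ≠ 0 := by
  rw [Ne, der_pt_pt_pt_eq_zero_iff, zero_add]
  intro h0
  have hs := hcub.2 i₁ j₁ j₂ j₃ h₁ h₂ h₃
  rw [if_pos h, h0, mul_zero, eq_comm, inv_eq_zero, Nat.cast_eq_zero] at hs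
  obtain ⟨_, _⟩ := validPt_iff.1 h₁
  omega

theorem CubicValues.der_dual_eq_zero (hcub : CubicValues A c) {i₀ : Fin 3} {k l j₀ : ℕ}
    (h : ValidPt A (i₁, j₁)) (hk : ValidPt A (i₀, k)) (hl : ValidPt A (i₀, l)) (hkl : k + l = j₀)
    (hne : (i₁, j₁) ≠ (i₀, j₀)) :
    der A c (.pt i₁ (A i₁ - j₁)) (.pt i₀ k) (.pt i₀ l) 0 0 = 0 := by
  refine hcub.der_eq_zero h.dual hk hl ?_
  rintro ⟨rfl, -, hsum⟩
  obtain ⟨_, _⟩ := validPt_iff.1 h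
  exact hne (Prod.ext rfl (by dsimp only; omega))

end CubicValues

theorem step1_iv_general (A : Fin 3 → ℕ)
    (c : Expv → ℕ → ℂ) (hadm : IsAdmissible A c) (hcub : CubicValues A c)
    (i₁ i₂ : Fin 3) (h12 : i₁ ≠ i₂)
    (ha₂ : A i₂ = 2)
    (γ : Expv) (hγ : Valid A γ) (hlen : len γ = 4)
    (j₁ : ℕ) (hj₁ : 2 ≤ j₁) (hv₁ : ValidPt A (i₁, j₁))
    (hle : e i₁ j₁ + 2 • e i₂ 1 ≤ γ) :
    c γ 0 = 0 := by
  obtain ⟨p, rfl⟩ := exists_eq_add_single_of_le hle <| by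
    simp [hlen, len_add, e, len_single, Finsupp.smul_single]
  have hj₁A : j₁ ≤ A i₁ - 1 := hv₁.2
  have hv₂ : ValidPt A (i₂, 1) := validPt_iff.2 ⟨le_rfl, by omega⟩
  have hv₁₁ : ValidPt A (i₁, 1) := validPt_iff.2 ⟨le_rfl, by omega⟩
  have hv₁₂ : ValidPt A (i₁, j₁ - 1) := validPt_iff.2 ⟨by omega, by omega⟩
  set δ : Expv := Finsupp.single p 1
  have hlhs : quadTerm A c (.pt i₂ 1) (.pt i₂ 1) (.pt i₁ 1) (.pt i₁ (j₁ - 1)) δ 0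
      = A i₁ * der A c (.pt i₂ 1) (.pt i₂ 1) (.pt i₁ j₁) δ 0
          * der A c (.pt i₁ (A i₁ - j₁)) (.pt i₁ 1) (.pt i₁ (j₁ - 1)) 0 0 := by
    rw [quadTerm_pt_single,
      ptContraction_eq_zero_of_left fun i j hij => hcub.der_eq_zero hv₂ hv₂ hij fun ⟨_, _, h⟩ => by
        have := (validPt_iff.1 hij).1
        omega,
      ptContraction_eq_of_right hv₁ fun i j hij =>
        hcub.der_dual_eq_zero hij hv₁₁ hv₁₂ (by omega),
      zero_add]
  have hrhs : quadTerm A c (.pt i₂ 1) (.pt i₁ 1) (.pt i₂ 1) (.pt i₁ (j₁ - 1)) δ 0 = 0 := by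
    rw [quadTerm_pt_single,
      ptContraction_eq_zero_of_left fun i j hij => hcub.der_eq_zero hv₂ hv₁₁ hij (by tauto),
      ptContraction_eq_zero_of_right fun i j hij => hcub.der_eq_zero hij.dual hv₂ hv₁₂ (by tauto),
      add_zero]
  have hW := hadm.wdvv (.pt i₂ 1) (.pt i₂ 1) (.pt i₁ 1) (.pt i₁ (j₁ - 1)) hv₂ hv₂ hv₁₁ hv₁₂ δ
    (hγ.mono le_add_self) 0
  rw [hlhs, hrhs, mul_eq_zero, or_iff_left (hcub.der_ne_zero hv₁.dual hv₁₁ hv₁₂ (by omega)),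
    mul_eq_zero, Nat.cast_eq_zero, or_iff_right (by omega), der_pt_pt_pt_eq_zero_iff] at hW
  convert hW using 2
  simp only [δ, two_smul]
  abel

/-- Sub-Lemma (Step 1-(iv)). -/
theorem step1_iv (A : Fin 3 → ℕ) (hA : ∀ i, 1 ≤ A i) (hA01 : A 0 ≤ A 1) (hA12 : A 1 ≤ A 2)
    (c : Expv → ℕ → ℂ) (hadm : IsAdmissible A c) (hcub : CubicValues A c)
    (i₁ i₂ i₃ : Fin 3) (h12 : i₁ ≠ i₂) (h13 : i₁ ≠ i₃) (h23 : i₂ ≠ i₃)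
    (ha₁ : 3 ≤ A i₁) (ha₂ : A i₂ = 2)
    (γ : Expv) (hγ : Valid A γ) (hlen : len γ = 4)
    (hi₃ : ∀ j₃ : ℕ, 1 ≤ j₃ → γ (i₃, j₃) = 0)
    (j₁ : ℕ) (hj₁ : 2 ≤ j₁) (hv₁ : ValidPt A (i₁, j₁))
    (hle : e i₁ j₁ + 2 • e i₂ 1 ≤ γ) :
    c γ 0 = 0 :=
  step1_iv_general A c hadm hcub i₁ i₂ h12 ha₂ γ hγ hlen j₁ hj₁ hv₁ hle

end FrobeniusUniqueness
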